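/- arXiv:1611.04186 — 3 statements merged into one kernel-verified Lean document; each statement's English description precedes it below -/
import Mathlib

section
/- Let 𝒳 and 𝒳' be split algebraic tori (ℂ*)^n and (ℂ*)^n with coordinates (X_a) and (X'_a), let ε : I × I → ℤ be an exchange matrix, and let c ∈ I. Define the cluster 𝒳-mutation μ_c by pullback: μ_c*(X'_c) = X_c⁻¹, and for a ≠ c, μ_c*(X'_a) = X_a·(1 + X_c^{−sign(ε_{ac})})^{−ε_{ac}}. Then μ_c followed by the cluster 𝒳-mutation at c with exchange matrix μ_c(ε) is the identity rational map; i.e., cluster 𝒳-mutation at a fixed vertex is a birational involution. -/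
/-- Integer matrix mutation of the exchange matrix `ε` at the vertex `c`. -/
def intMatrixMutation {I : Type*} [DecidableEq I] (ε : I → I → ℤ) (c : I) : I → I → ℤ :=
  fun a b =>
    if a = c ∨ b = c then -ε a b
    else if ε a c * ε c b ≤ 0 then ε a b
    else ε a b + |ε a c| * ε c b

/-- The pullback of the cluster coordinates under the cluster 𝒳-mutation at `c`
with exchange matrix `ε`, expressed on tuples of elements of a field. -/
def clusterXMutation {I : Type*} [DecidableEq I] {K : Type*} [Field K]
    (ε : I → I → ℤ) (c : I) (X : I → K) : I → K :=
  fun a =>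
    if a = c then (X c)⁻¹
    else X a * (1 + X c ^ (-(ε a c).sign)) ^ (-(ε a c))

/-! Mutating at `c` replaces `X_c` by `X_c⁻¹` and `ε_{ac}` by `-ε_{ac}`, so the second mutation
multiplies `X_a` by `(1 + X_c^{-sign ε_{ac}}) ^ ε_{ac}`, exactly undoing the first. The only
obstruction is the junk value `0⁻¹ = 0`, excluded by `1 + X_c ≠ 0`; `X_c = 0` is harmless. -/

theorem one_add_zpow_neg_sign_ne_zero {K : Type*} [Field K] {x : K} (hx : 1 + x ≠ 0)
    {n : ℤ} (hn : n ≠ 0) : 1 + x ^ (-n.sign) ≠ 0 := by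
  rcases hn.lt_or_gt with hneg | hpos
  · simpa [Int.sign_eq_neg_one_of_neg hneg] using hx
  · rw [Int.sign_eq_one_of_pos hpos, zpow_neg_one]
    rcases eq_or_ne x 0 with rfl | hx0
    · simp
    · rwa [← mul_ne_zero_iff_left hx0, mul_add, mul_one, mul_inv_cancel₀ hx0, add_comm]

theorem clusterXMutation_intMatrixMutation_clusterXMutation {I : Type*} [DecidableEq I]
    {K : Type*} [Field K] (ε : I → I → ℤ) (c : I) {X : I → K} (hX : 1 + X c ≠ 0) :
    clusterXMutation (intMatrixMutation ε c) c (clusterXMutation ε c X) = X := by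
  funext a
  by_cases hac : a = c
  · subst hac
    simp [clusterXMutation]
  have hεac : intMatrixMutation ε c a c = -ε a c := by simp [intMatrixMutation]
  simp only [clusterXMutation, hac, if_true, if_false, hεac, Int.sign_neg, neg_neg, inv_zpow',
    mul_assoc]
  rcases eq_or_ne (ε a c) 0 with h0 | h0
  · simp [h0]
  · rw [← zpow_add₀ (one_add_zpow_neg_sign_ne_zero hX h0), neg_add_cancel, zpow_zero, mul_one]

theorem stmt_9 {I : Type*} [DecidableEq I] (ε : I → I → ℤ) (c : I) :
    ∀ a : I,
      clusterXMutation (intMatrixMutation ε c) c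
        (clusterXMutation ε c
          (fun i => algebraMap (MvPolynomial I ℚ) (FractionRing (MvPolynomial I ℚ))
            (MvPolynomial.X i))) a =
      algebraMap (MvPolynomial I ℚ) (FractionRing (MvPolynomial I ℚ)) (MvPolynomial.X a) := by
  have h1X : (1 + MvPolynomial.X c : MvPolynomial I ℚ) ≠ 0 := fun h => by
    simpa using congrArg (MvPolynomial.eval 0) h
  have hX : (1 : FractionRing (MvPolynomial I ℚ)) +
      algebraMap (MvPolynomial I ℚ) _ (MvPolynomial.X c) ≠ 0 := by
    rwa [← map_one (algebraMap (MvPolynomial I ℚ) _), ← map_add,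
      map_ne_zero_iff _ (IsFractionRing.injective _ _)]
  exact congrFun (clusterXMutation_intMatrixMutation_clusterXMutation ε c hX)
end

section
/- The tropicalization of a positive rational map is functorial: if φ : (ℂ*)^m ⇢ (ℂ*)^n and ψ : (ℂ*)^n ⇢ (ℂ*)^k are positive rational maps (each coordinate of the map is a ratio of nonzero polynomials with nonnegative integer coefficients), then the tropicalizations satisfy (ψ ∘ φ)^t = ψ^t ∘ φ^t as maps ℤ^m → ℤ^k, where the tropicalization of a positive rational function f/g is obtained by replacing + with max, × with +, ÷ with −, constants with 0, and variables X_i with integer variables x_i. -/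
/-!
On polynomials with nonnegative coefficients no monomial can cancel, so tropicalization turns
sums into `max` and products into `+`. Substituting `fᵢ / gᵢ` into a positive `p` and clearing
the denominator `∏ gᵢ ^ degᵢ p` gives a positive polynomial whose tropicalization is
`p^t (f^t - g^t)` plus that of the denominator. Two positive representations `a / b = c / d`
of one rational function satisfy `a d = c b`, hence `a^t - b^t = c^t - d^t`; applying this to
`h / e` and the cleared form of `p(f/g) / q(f/g)` gives the claim.
-/

open BigOperators

/-- The tropicalization of a polynomial with positive coefficients:
`max` over its monomials of the linear form given by the exponent vector. -/
def tropPoly {m : ℕ} (f : MvPolynomial (Fin m) ℤ) (x : Fin m → ℤ) : ℤ :=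
  WithBot.unbotD 0 (f.support.sup fun d => ((∑ i, (d i : ℤ) * x i : ℤ) : WithBot ℤ))

/-- A polynomial is positive if it is nonzero and all its coefficients are nonnegative. -/
def IsPosPoly {m : ℕ} (f : MvPolynomial (Fin m) ℤ) : Prop :=
  f ≠ 0 ∧ ∀ d, 0 ≤ f.coeff d

open MvPolynomial Finset

section Positivity

variable {m : ℕ} {a b : MvPolynomial (Fin m) ℤ}

lemma support_add_of_coeff_nonneg (ha : ∀ d, 0 ≤ a.coeff d) (hb : ∀ d, 0 ≤ b.coeff d) :
    (a + b).support = a.support ∪ b.support := by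
  ext d
  simp only [mem_support_iff, mem_union, coeff_add]
  have := ha d
  have := hb d
  omega

lemma isPosPoly_C {c : ℤ} (hc : 0 < c) : IsPosPoly (C c : MvPolynomial (Fin m) ℤ) :=
  ⟨C_ne_zero.mpr hc.ne', fun d => by rw [coeff_C]; split_ifs <;> omega⟩

lemma isPosPoly_one : IsPosPoly (1 : MvPolynomial (Fin m) ℤ) := by
  simpa using isPosPoly_C (m := m) one_pos

namespace IsPosPoly

lemma coeff_pos (ha : IsPosPoly a) {d : Fin m →₀ ℕ} (hd : d ∈ a.support) : 0 < a.coeff d :=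
  (ha.2 d).lt_of_ne' (mem_support_iff.mp hd)

lemma add (ha : IsPosPoly a) (hb : IsPosPoly b) : IsPosPoly (a + b) := by
  refine ⟨fun h0 => ha.1 ?_, fun d => by rw [coeff_add]; exact add_nonneg (ha.2 d) (hb.2 d)⟩
  have h := congrArg MvPolynomial.support h0
  rw [support_add_of_coeff_nonneg ha.2 hb.2, support_zero, union_eq_empty] at h
  exact support_eq_empty.mp h.1

lemma mul (ha : IsPosPoly a) (hb : IsPosPoly b) : IsPosPoly (a * b) :=
  ⟨mul_ne_zero ha.1 hb.1, fun d => by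
    rw [coeff_mul]; exact sum_nonneg fun p _ => mul_nonneg (ha.2 p.1) (hb.2 p.2)⟩

lemma pow (ha : IsPosPoly a) (k : ℕ) : IsPosPoly (a ^ k) := by
  induction k with
  | zero => simpa using isPosPoly_one
  | succ k ih => simpa [pow_succ] using ih.mul ha

lemma add_mem_support_mul (ha : IsPosPoly a) (hb : IsPosPoly b) {u v : Fin m →₀ ℕ}
    (hu : u ∈ a.support) (hv : v ∈ b.support) : u + v ∈ (a * b).support := by
  rw [mem_support_iff, coeff_mul]
  refine (sum_pos' (fun p _ => mul_nonneg (ha.2 p.1) (hb.2 p.2)) ⟨(u, v), ?_, ?_⟩).ne'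
  · simp
  · exact mul_pos (ha.coeff_pos hu) (hb.coeff_pos hv)

end IsPosPoly

lemma isPosPoly_prod {ι : Type*} (s : Finset ι) {t : ι → MvPolynomial (Fin m) ℤ}
    (ht : ∀ i ∈ s, IsPosPoly (t i)) : IsPosPoly (∏ i ∈ s, t i) :=
  prod_induction t IsPosPoly (fun _ _ => IsPosPoly.mul) isPosPoly_one ht

lemma isPosPoly_sum {ι : Type*} {s : Finset ι} (hs : s.Nonempty)
    {t : ι → MvPolynomial (Fin m) ℤ}
    (ht : ∀ i ∈ s, IsPosPoly (t i)) : IsPosPoly (∑ i ∈ s, t i) :=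
  sum_induction_nonempty t IsPosPoly (fun _ _ => IsPosPoly.add) hs ht

end Positivity

section Tropicalization

variable {m : ℕ} {a b : MvPolynomial (Fin m) ℤ}

lemma tropPoly_eq_sup' (ha : a ≠ 0) (x : Fin m → ℤ) :
    tropPoly a x = a.support.sup' (support_nonempty.mpr ha) (Finsupp.weight x) := by
  have hw : ∀ d : Fin m →₀ ℕ, (∑ i, (d i : ℤ) * x i) = Finsupp.weight x d := fun d => by
    simp [Finsupp.weight_eq_sum]
  simp only [tropPoly, hw]
  rw [← WithBot.unbotD_coe 0 (a.support.sup' _ _), coe_sup']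
  rfl

lemma tropPoly_add (ha : IsPosPoly a) (hb : IsPosPoly b) (x : Fin m → ℤ) :
    tropPoly (a + b) x = max (tropPoly a x) (tropPoly b x) := by
  classical
  rw [tropPoly_eq_sup' (ha.add hb).1, tropPoly_eq_sup' ha.1, tropPoly_eq_sup' hb.1,
    ← sup'_union, sup'_congr _ (support_add_of_coeff_nonneg ha.2 hb.2) fun _ _ => rfl]

lemma tropPoly_mul (ha : IsPosPoly a) (hb : IsPosPoly b) (x : Fin m → ℤ) :
    tropPoly (a * b) x = tropPoly a x + tropPoly b x := by
  rw [tropPoly_eq_sup' (ha.mul hb).1, tropPoly_eq_sup' ha.1, tropPoly_eq_sup' hb.1]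
  apply le_antisymm
  · refine sup'_le _ _ fun d hd => ?_
    obtain ⟨u, hu, v, hv, rfl⟩ := mem_add.mp (support_mul a b hd)
    rw [map_add]
    exact add_le_add (le_sup' _ hu) (le_sup' _ hv)
  · obtain ⟨u, hu, hu_max⟩ := exists_mem_eq_sup' (support_nonempty.mpr ha.1) (Finsupp.weight x)
    obtain ⟨v, hv, hv_max⟩ := exists_mem_eq_sup' (support_nonempty.mpr hb.1) (Finsupp.weight x)
    rw [hu_max, hv_max, ← map_add]
    exact le_sup' _ (ha.add_mem_support_mul hb hu hv)

lemma tropPoly_C {c : ℤ} (hc : 0 < c) (x : Fin m → ℤ) :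
    tropPoly (C c : MvPolynomial (Fin m) ℤ) x = 0 := by
  rw [tropPoly_eq_sup' (isPosPoly_C hc).1]
  simp only [support_C, hc.ne', if_false, sup'_singleton, map_zero]

lemma tropPoly_one (x : Fin m → ℤ) : tropPoly (1 : MvPolynomial (Fin m) ℤ) x = 0 := by
  simpa using tropPoly_C (m := m) one_pos x

lemma tropPoly_pow (ha : IsPosPoly a) (k : ℕ) (x : Fin m → ℤ) :
    tropPoly (a ^ k) x = k * tropPoly a x := by
  induction k with
  | zero => simp [tropPoly_one]
  | succ k ih => rw [pow_succ, tropPoly_mul (ha.pow k) ha, ih]; push_cast; ring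

lemma tropPoly_prod {ι : Type*} (s : Finset ι) {t : ι → MvPolynomial (Fin m) ℤ}
    (ht : ∀ i ∈ s, IsPosPoly (t i)) (x : Fin m → ℤ) :
    tropPoly (∏ i ∈ s, t i) x = ∑ i ∈ s, tropPoly (t i) x := by
  classical
  induction s using Finset.induction with
  | empty => simp [tropPoly_one]
  | insert i s hi ih =>
    rw [prod_insert hi, sum_insert hi,
      tropPoly_mul (ht i (mem_insert_self i s))
        (isPosPoly_prod s fun j hj => ht j (mem_insert_of_mem hj)),
      ih fun j hj => ht j (mem_insert_of_mem hj)]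

lemma tropPoly_sum {ι : Type*} {s : Finset ι} (hs : s.Nonempty)
    {t : ι → MvPolynomial (Fin m) ℤ}
    (ht : ∀ i ∈ s, IsPosPoly (t i)) (x : Fin m → ℤ) :
    tropPoly (∑ i ∈ s, t i) x = s.sup' hs fun i => tropPoly (t i) x := by
  induction hs using Finset.Nonempty.cons_induction with
  | singleton i => simp
  | cons i s hi hs ih =>
    rw [sum_cons, sup'_cons,
      tropPoly_add (ht i (mem_cons_self i s))
        (isPosPoly_sum hs fun j hj => ht j (mem_cons_of_mem hj)),
      ih fun j hj => ht j (mem_cons_of_mem hj)]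

lemma tropPoly_sub_eq_of_algebraMap_div_eq {K : Type*} [Field K]
    [Algebra (MvPolynomial (Fin m) ℤ) K] [IsFractionRing (MvPolynomial (Fin m) ℤ) K]
    {c d : MvPolynomial (Fin m) ℤ} (ha : IsPosPoly a) (hb : IsPosPoly b) (hc : IsPosPoly c)
    (hd : IsPosPoly d)
    (h : algebraMap _ K a / algebraMap _ K b = algebraMap _ K c / algebraMap _ K d)
    (x : Fin m → ℤ) : tropPoly a x - tropPoly b x = tropPoly c x - tropPoly d x := by
  rw [div_eq_div_iff (IsFractionRing.to_map_eq_zero_iff.not.mpr hb.1)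
    (IsFractionRing.to_map_eq_zero_iff.not.mpr hd.1), ← map_mul, ← map_mul] at h
  have := congrArg (tropPoly · x) (IsFractionRing.injective _ K h)
  simp only [tropPoly_mul ha hd, tropPoly_mul hc hb] at this
  linarith

end Tropicalization

section Substitution

variable {m n : ℕ}

noncomputable def substDenom (g : Fin n → MvPolynomial (Fin m) ℤ)
    (p : MvPolynomial (Fin n) ℤ) : MvPolynomial (Fin m) ℤ :=
  ∏ i, g i ^ p.degreeOf i

noncomputable def substNum (f g : Fin n → MvPolynomial (Fin m) ℤ)
    (p : MvPolynomial (Fin n) ℤ) : MvPolynomial (Fin m) ℤ :=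
  ∑ d ∈ p.support, C (p.coeff d) * ∏ i, f i ^ d i * g i ^ (p.degreeOf i - d i)

variable {f g : Fin n → MvPolynomial (Fin m) ℤ} {p : MvPolynomial (Fin n) ℤ}

lemma isPosPoly_substDenom (hg : ∀ i, IsPosPoly (g i)) : IsPosPoly (substDenom g p) :=
  isPosPoly_prod _ fun i _ => (hg i).pow _

lemma tropPoly_substDenom (hg : ∀ i, IsPosPoly (g i)) (x : Fin m → ℤ) :
    tropPoly (substDenom g p) x = ∑ i, (p.degreeOf i : ℤ) * tropPoly (g i) x := by
  rw [substDenom, tropPoly_prod _ fun i _ => (hg i).pow _]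
  simp only [tropPoly_pow (hg _)]

lemma isPosPoly_prod_pow_mul_pow (hf : ∀ i, IsPosPoly (f i)) (hg : ∀ i, IsPosPoly (g i))
    (d e : Fin n → ℕ) : IsPosPoly (∏ i, f i ^ d i * g i ^ e i) :=
  isPosPoly_prod _ fun i _ => ((hf i).pow _).mul ((hg i).pow _)

lemma tropPoly_prod_pow_mul_pow (hf : ∀ i, IsPosPoly (f i)) (hg : ∀ i, IsPosPoly (g i))
    {d : Fin n →₀ ℕ} {D : Fin n → ℕ} (hdD : ∀ i, d i ≤ D i) (x : Fin m → ℤ) :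
    tropPoly (∏ i, f i ^ d i * g i ^ (D i - d i)) x =
      Finsupp.weight (fun i => tropPoly (f i) x - tropPoly (g i) x) d +
        ∑ i, (D i : ℤ) * tropPoly (g i) x := by
  rw [tropPoly_prod _ fun i _ => ((hf i).pow _).mul ((hg i).pow _), Finsupp.weight_eq_sum,
    ← sum_add_distrib]
  refine sum_congr rfl fun i _ => ?_
  rw [tropPoly_mul ((hf i).pow _) ((hg i).pow _), tropPoly_pow (hf i), tropPoly_pow (hg i),
    Nat.cast_sub (hdD i), nsmul_eq_mul]
  ring

lemma isPosPoly_substNum (hf : ∀ i, IsPosPoly (f i)) (hg : ∀ i, IsPosPoly (g i))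
    (hp : IsPosPoly p) : IsPosPoly (substNum f g p) :=
  isPosPoly_sum (support_nonempty.mpr hp.1) fun _ hd =>
    (isPosPoly_C (hp.coeff_pos hd)).mul (isPosPoly_prod_pow_mul_pow hf hg _ _)

lemma tropPoly_substNum (hf : ∀ i, IsPosPoly (f i)) (hg : ∀ i, IsPosPoly (g i))
    (hp : IsPosPoly p) (x : Fin m → ℤ) :
    tropPoly (substNum f g p) x =
      tropPoly p (fun i => tropPoly (f i) x - tropPoly (g i) x) + tropPoly (substDenom g p) x := by
  have hne := support_nonempty.mpr hp.1
  rw [substNum, tropPoly_sum hne fun _ hd =>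
      (isPosPoly_C (hp.coeff_pos hd)).mul (isPosPoly_prod_pow_mul_pow hf hg _ _),
    tropPoly_eq_sup' hp.1, sup'_add, tropPoly_substDenom hg]
  refine sup'_congr hne rfl fun d hd => ?_
  rw [tropPoly_mul (isPosPoly_C (hp.coeff_pos hd)) (isPosPoly_prod_pow_mul_pow hf hg _ _),
    tropPoly_C (hp.coeff_pos hd), zero_add,
    tropPoly_prod_pow_mul_pow hf hg fun i => monomial_le_degreeOf i hd]

lemma eval₂_div_eq_substNum_div {K : Type*} [Field K] [Algebra (MvPolynomial (Fin m) ℤ) K]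
    (hg : ∀ i, algebraMap _ K (g i) ≠ 0) :
    eval₂ (Int.castRingHom K) (fun i => algebraMap _ K (f i) / algebraMap _ K (g i)) p =
      algebraMap _ K (substNum f g p) / algebraMap _ K (substDenom g p) := by
  set φ := algebraMap (MvPolynomial (Fin m) ℤ) K
  have hφC : ∀ c : ℤ, φ (C c) = Int.castRingHom K c := fun c =>
    RingHom.congr_fun (Subsingleton.elim (φ.comp C) (Int.castRingHom K)) c
  have hdenom : φ (substDenom g p) ≠ 0 := by
    rw [substDenom, map_prod]
    exact prod_ne_zero_iff.mpr fun i _ => by rw [map_pow]; exact pow_ne_zero _ (hg i)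
  rw [eq_div_iff hdenom, eval₂_eq', sum_mul, substNum, map_sum]
  refine sum_congr rfl fun d hd => ?_
  rw [map_mul, hφC, mul_assoc, substDenom, map_prod, map_prod, ← prod_mul_distrib]
  congr 1
  refine prod_congr rfl fun i _ => ?_
  rw [map_mul, map_pow, map_pow, map_pow, div_pow,
    ← Nat.add_sub_cancel' (monomial_le_degreeOf i hd), pow_add, Nat.add_sub_cancel_left]
  field_simp [hg i]

end Substitution

theorem stmt_11 {m n k : ℕ}
    -- the positive rational map φ : (ℂ*)^m ⇢ (ℂ*)^n, with components f j / g j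
    (f g : Fin n → MvPolynomial (Fin m) ℤ)
    (hf : ∀ j, IsPosPoly (f j)) (hg : ∀ j, IsPosPoly (g j))
    -- the positive rational map ψ : (ℂ*)^n ⇢ (ℂ*)^k, with components p j / q j
    (p q : Fin k → MvPolynomial (Fin n) ℤ)
    (hp : ∀ j, IsPosPoly (p j)) (hq : ∀ j, IsPosPoly (q j))
    -- a positive representation h j / e j of the composite ψ ∘ φ
    (h e : Fin k → MvPolynomial (Fin m) ℤ)
    (hh : ∀ j, IsPosPoly (h j)) (he : ∀ j, IsPosPoly (e j))
    (hcomp : ∀ j,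
      algebraMap (MvPolynomial (Fin m) ℤ) (FractionRing (MvPolynomial (Fin m) ℤ)) (h j) /
        algebraMap (MvPolynomial (Fin m) ℤ) (FractionRing (MvPolynomial (Fin m) ℤ)) (e j) =
      MvPolynomial.eval₂ (Int.castRingHom (FractionRing (MvPolynomial (Fin m) ℤ)))
          (fun i =>
            algebraMap (MvPolynomial (Fin m) ℤ) (FractionRing (MvPolynomial (Fin m) ℤ)) (f i) /
            algebraMap (MvPolynomial (Fin m) ℤ) (FractionRing (MvPolynomial (Fin m) ℤ)) (g i))
          (p j) /
      MvPolynomial.eval₂ (Int.castRingHom (FractionRing (MvPolynomial (Fin m) ℤ)))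
          (fun i =>
            algebraMap (MvPolynomial (Fin m) ℤ) (FractionRing (MvPolynomial (Fin m) ℤ)) (f i) /
            algebraMap (MvPolynomial (Fin m) ℤ) (FractionRing (MvPolynomial (Fin m) ℤ)) (g i))
          (q j)) :
    -- (ψ ∘ φ)^t = ψ^t ∘ φ^t
    ∀ (j : Fin k) (x : Fin m → ℤ),
      tropPoly (h j) x - tropPoly (e j) x =
        tropPoly (p j) (fun i => tropPoly (f i) x - tropPoly (g i) x) -
          tropPoly (q j) (fun i => tropPoly (f i) x - tropPoly (g i) x) := by
  intro j x
  have hg' : ∀ i, algebraMap _ (FractionRing (MvPolynomial (Fin m) ℤ)) (g i) ≠ 0 :=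
    fun i => IsFractionRing.to_map_eq_zero_iff.not.mpr (hg i).1
  have hψφ := hcomp j
  rw [eval₂_div_eq_substNum_div hg', eval₂_div_eq_substNum_div hg', div_div_div_eq,
    ← map_mul, ← map_mul] at hψφ
  have htrop := tropPoly_sub_eq_of_algebraMap_div_eq (hh j) (he j)
    ((isPosPoly_substNum hf hg (hp j)).mul (isPosPoly_substDenom hg))
    ((isPosPoly_substDenom hg).mul (isPosPoly_substNum hf hg (hq j))) hψφ x
  rw [tropPoly_mul (isPosPoly_substNum hf hg (hp j)) (isPosPoly_substDenom hg),
    tropPoly_mul (isPosPoly_substDenom hg) (isPosPoly_substNum hf hg (hq j)),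
    tropPoly_substNum hf hg (hp j), tropPoly_substNum hf hg (hq j)] at htrop
  linarith
end

section
/- Amalgamation of seeds commutes with mutation at non-frozen vertices: let {(I^s, I₀^s, ε^s, d^s)} be a finite family of seeds with injections i^s : I^s → K satisfying the amalgamation conditions (images cover K; preimages of overlaps are frozen; matching d values on overlaps), and let ε be the amalgamated exchange matrix ε_{ab} = ∑_{i^s(a^s)=a, i^s(b^s)=b} ε^s_{a^s b^s}. If a = i^s(a^s) for a non-frozen vertex a^s ∈ I^s \ I₀^s (so a lies in the image of no other i^t), then mutating ε at a equals the amalgamation of the family in which ε^s is replaced by its mutation at a^s (and all other ε^t unchanged). -/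
open BigOperators

/-- Fock–Goncharov matrix mutation of the exchange matrix `ε` at the vertex `c`. -/
def matrixMutation {I : Type*} [DecidableEq I] (ε : I → I → ℚ) (c : I) : I → I → ℚ :=
  fun a b =>
    if a = c ∨ b = c then -ε a b
    else if ε a c * ε c b ≤ 0 then ε a b
    else ε a b + |ε a c| * ε c b

/-- The amalgamated exchange matrix on `K`:
`ε_{ab} = ∑_{i^s(aˢ)=a, i^s(bˢ)=b} εˢ_{aˢbˢ}`. -/
def amalgamatedMatrix {S K : Type*} [Fintype S] [DecidableEq K] {I : S → Type*}
    [∀ s, Fintype (I s)] (ι : ∀ s, I s → K) (ε : ∀ s, I s → I s → ℚ) : K → K → ℚ :=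
  fun a b => ∑ s, ∑ as : I s, ∑ bs : I s,
    if ι s as = a ∧ ι s bs = b then ε s as bs else 0

/-!
Write the amalgamated matrix as `Σₛ ιₛ₊ εˢ`, where `f₊ η = pushforwardMatrix f η` is the
extension of `η` by zero along `f`. Mutation at `c = ι_{s₀} a₀` negates row and column `c` and
corrects the other entries by terms read off row and column `c`; since `a₀` is not frozen, `c`
lies in the image of no other `ιₜ`; so the summands `t ≠ s₀` vanish on row and column `c` and pass
through the mutation unchanged. What remains is that mutation commutes with `ι_{s₀}₊`, which holds
because `ι_{s₀}` is injective and `ι_{s₀}₊` is zero off its image.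
-/

section Pushforward

variable {J K : Type*} [Fintype J] [DecidableEq K]

def pushforwardMatrix (f : J → K) (η : J → J → ℚ) : K → K → ℚ :=
  fun a b => ∑ x, ∑ y, if f x = a ∧ f y = b then η x y else 0

theorem pushforwardMatrix_apply_apply {f : J → K} (hf : Function.Injective f)
    (η : J → J → ℚ) (x y : J) : pushforwardMatrix f η (f x) (f y) = η x y := by
  classical
  simp [pushforwardMatrix, hf.eq_iff, ite_and]

theorem pushforwardMatrix_of_notMem_range_left {f : J → K} (η : J → J → ℚ) {a : K}
    (ha : a ∉ Set.range f) (b : K) : pushforwardMatrix f η a b = 0 :=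
  Finset.sum_eq_zero fun x _ => Finset.sum_eq_zero fun y _ => by
    simp [show f x ≠ a from fun h => ha ⟨x, h⟩]

theorem pushforwardMatrix_of_notMem_range_right {f : J → K} (η : J → J → ℚ) (a : K) {b : K}
    (hb : b ∉ Set.range f) : pushforwardMatrix f η a b = 0 :=
  Finset.sum_eq_zero fun x _ => Finset.sum_eq_zero fun y _ => by
    simp [show f y ≠ b from fun h => hb ⟨y, h⟩]

theorem matrixMutation_pushforwardMatrix [DecidableEq J] {f : J → K}
    (hf : Function.Injective f) (η : J → J → ℚ) (x : J) :
    matrixMutation (pushforwardMatrix f η) (f x) = pushforwardMatrix f (matrixMutation η x) := by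
  funext a b
  by_cases ha : a ∈ Set.range f
  · obtain ⟨a, rfl⟩ := ha
    by_cases hb : b ∈ Set.range f
    · obtain ⟨b, rfl⟩ := hb
      simp only [matrixMutation, pushforwardMatrix_apply_apply hf, hf.eq_iff]
    · have hbx : b ≠ f x := fun h => hb ⟨x, h.symm⟩
      simp [matrixMutation, pushforwardMatrix_of_notMem_range_right _ _ hb, hbx]
  · have hax : a ≠ f x := fun h => ha ⟨x, h.symm⟩
    simp [matrixMutation, pushforwardMatrix_of_notMem_range_left _ ha, hax]

end Pushforward

theorem matrixMutation_add_of_row_col_eq_zero {I : Type*} [DecidableEq I]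
    (P R : I → I → ℚ) (c : I) (hrow : ∀ b, R c b = 0) (hcol : ∀ a, R a c = 0) :
    matrixMutation (P + R) c = matrixMutation P c + R := by
  funext a b
  by_cases h : a = c ∨ b = c
  · have hR : R a b = 0 := by rcases h with rfl | rfl <;> simp [hrow, hcol]
    simp [matrixMutation, h, hR]
  · simp only [matrixMutation, h, Pi.add_apply, hrow, hcol, add_zero, if_false]
    split_ifs <;> ring

theorem amalgamatedMatrix_eq_add_sum_erase {S K : Type*} [Fintype S] [DecidableEq S]
    [DecidableEq K] {I : S → Type*} [∀ s, Fintype (I s)] (ι : ∀ s, I s → K)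
    (ε : ∀ s, I s → I s → ℚ) (s₀ : S) :
    amalgamatedMatrix ι ε = pushforwardMatrix (ι s₀) (ε s₀) +
      ∑ s ∈ Finset.univ.erase s₀, pushforwardMatrix (ι s) (ε s) := by
  rw [Finset.add_sum_erase _ (fun s => pushforwardMatrix (ι s) (ε s)) (Finset.mem_univ s₀)]
  funext a b
  simp only [Finset.sum_apply]
  rfl

theorem stmt_19_general {S K : Type*} [Fintype S] [DecidableEq S] [DecidableEq K]
    {I : S → Type*} [∀ s, Fintype (I s)] [∀ s, DecidableEq (I s)]
    (I₀ : ∀ s, Set (I s)) (ε : ∀ s, I s → I s → ℚ)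
    (ι : ∀ s, I s → K)
    (hinj : ∀ s, Function.Injective (ι s))
    -- (2) preimages of overlaps are frozen
    (hoverlap : ∀ s t, s ≠ t → ∀ (a : I s) (b : I t), ι s a = ι t b → a ∈ I₀ s)
    -- a non-frozen vertex of the seed indexed by s₀
    (s₀ : S) (a₀ : I s₀) (ha₀ : a₀ ∉ I₀ s₀) :
    matrixMutation (amalgamatedMatrix ι ε) (ι s₀ a₀) =
      amalgamatedMatrix ι (Function.update ε s₀ (matrixMutation (ε s₀) a₀)) := by
  have hc : ∀ s ∈ Finset.univ.erase s₀, ι s₀ a₀ ∉ Set.range (ι s) := by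
    rintro s hs ⟨x, hx⟩
    exact ha₀ (hoverlap s₀ s (Finset.ne_of_mem_erase hs).symm a₀ x hx.symm)
  have hupdate : ∑ s ∈ Finset.univ.erase s₀,
      pushforwardMatrix (ι s) (Function.update ε s₀ (matrixMutation (ε s₀) a₀) s) =
      ∑ s ∈ Finset.univ.erase s₀, pushforwardMatrix (ι s) (ε s) :=
    Finset.sum_congr rfl fun s hs => by rw [Function.update_of_ne (Finset.ne_of_mem_erase hs)]
  rw [amalgamatedMatrix_eq_add_sum_erase ι ε s₀, amalgamatedMatrix_eq_add_sum_erase _ _ s₀,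
    Function.update_self, hupdate, matrixMutation_add_of_row_col_eq_zero,
    matrixMutation_pushforwardMatrix (hinj s₀)]
  · intro b
    simp only [Finset.sum_apply]
    exact Finset.sum_eq_zero fun s hs => pushforwardMatrix_of_notMem_range_left _ (hc s hs) b
  · intro a
    simp only [Finset.sum_apply]
    exact Finset.sum_eq_zero fun s hs => pushforwardMatrix_of_notMem_range_right _ a (hc s hs)

theorem stmt_19 {S K : Type*} [Fintype S] [DecidableEq S] [DecidableEq K]
    {I : S → Type*} [∀ s, Fintype (I s)] [∀ s, DecidableEq (I s)]
    (I₀ : ∀ s, Set (I s)) (ε : ∀ s, I s → I s → ℚ) (d : ∀ s, I s → ℤ)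
    (ι : ∀ s, I s → K)
    (hinj : ∀ s, Function.Injective (ι s))
    -- (1) the images of the maps ι s cover K
    (hcover : ∀ k : K, ∃ s a, ι s a = k)
    -- (2) preimages of overlaps are frozen
    (hoverlap : ∀ s t, s ≠ t → ∀ (a : I s) (b : I t), ι s a = ι t b → a ∈ I₀ s)
    -- (3) matching multipliers on overlaps
    (hd : ∀ s t (a : I s) (b : I t), ι s a = ι t b → d s a = d t b)
    -- a non-frozen vertex of the seed indexed by s₀
    (s₀ : S) (a₀ : I s₀) (ha₀ : a₀ ∉ I₀ s₀) :
    matrixMutation (amalgamatedMatrix ι ε) (ι s₀ a₀) =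
      amalgamatedMatrix ι (Function.update ε s₀ (matrixMutation (ε s₀) a₀)) :=
  stmt_19_general I₀ ε ι hinj hoverlap s₀ a₀ ha₀
end
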